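/- Let R and T be two Alexandroff topologies on a set Y, and let R ∨ T denote their join (the minimal common strengthening). Then every element V of the minimal base of R ∨ T can be written uniquely as V = R0 ∩ T0 where R0 is in the minimal base of R, T0 is in the minimal base of T, and the specialization-equivalence classes of maximal points s(R0) and s(T0) intersect nontrivially; conversely, every such pair (R0, T0) with s(R0) ∩ s(T0) ≠ ∅ gives an element R0 ∩ T0 of the minimal base of R ∨ T. -/
import Mathlib


/-- `o` is the minimal open neighborhood of `y` in the topology `T`. -/
def MinNhd {Y : Type*} (T : TopologicalSpace Y) (y : Y) (o : Set Y) : Prop :=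
  T.IsOpen o ∧ y ∈ o ∧ ∀ V : Set Y, T.IsOpen V → y ∈ V → o ⊆ V

/-- Minimal neighborhoods are unique. -/
lemma minNhd_unique {Y : Type*} {t : TopologicalSpace Y} {y : Y} {o o' : Set Y}
    (h : MinNhd t y o) (h' : MinNhd t y o') : o = o' :=
  subset_antisymm (h.2.2 o' h'.1 h'.2.1) (h'.2.2 o h.1 h.2.1)

/-- Auxiliary topology whose opens are sets closed under the assignment
`y ↦ oR y ∩ oT y`. -/
def starTop {Y : Type*} (oR oT : Y → Set Y) : TopologicalSpace Y where
  IsOpen U := ∀ y ∈ U, oR y ∩ oT y ⊆ U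
  isOpen_univ := fun _ _ => Set.subset_univ _
  isOpen_inter := fun U V hU hV y hy =>
    Set.subset_inter (hU y hy.1) (hV y hy.2)
  isOpen_sUnion := fun S hS y hy => by
    obtain ⟨U, hU, hyU⟩ := hy
    exact (hS U hU y hyU).trans (Set.subset_sUnion_of_mem hU)

lemma minNhd_inf {Y : Type*} {R T : TopologicalSpace Y}
    (hR : ∀ y : Y, ∃ o : Set Y, MinNhd R y o)
    (hT : ∀ y : Y, ∃ o : Set Y, MinNhd T y o)
    {y : Y} {oRy oTy : Set Y} (h1 : MinNhd R y oRy) (h2 : MinNhd T y oTy) :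
    MinNhd (R ⊓ T) y (oRy ∩ oTy) := by
  classical
  set oR : Y → Set Y := fun z => (hR z).choose with hoR
  set oT : Y → Set Y := fun z => (hT z).choose with hoT
  have hoRm : ∀ z, MinNhd R z (oR z) := fun z => (hR z).choose_spec
  have hoTm : ∀ z, MinNhd T z (oT z) := fun z => (hT z).choose_spec
  have hle : starTop oR oT ≤ R ⊓ T := by
    refine le_inf ?_ ?_
    · intro U hU z hz
      exact Set.inter_subset_left.trans ((hoRm z).2.2 U hU hz)
    · intro U hU z hz
      exact Set.inter_subset_right.trans ((hoTm z).2.2 U hU hz)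
  refine ⟨?_, ⟨h1.2.1, h2.2.1⟩, ?_⟩
  · exact (R ⊓ T).isOpen_inter _ _ (IsOpen.mono h1.1 inf_le_left) (IsOpen.mono h2.1 inf_le_right)
  · intro V hV hyV
    have hV' := hle V hV
    have := hV' y hyV
    rwa [minNhd_unique (hoRm y) h1, minNhd_unique (hoTm y) h2] at this

/-- for Alexandroff topologies `R`, `T` on `Y`, every element `V`
of the minimal base of the join `R ∨ T` (the minimal common strengthening,
`R ⊓ T` in Mathlib's order on topologies) is uniquely `V = R₀ ∩ T₀` with
`R₀ ∈ minBase R`, `T₀ ∈ minBase T` and `s(R₀) ∩ s(T₀) ≠ ∅` (i.e. some point has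
`R₀` and `T₀` as its minimal `R`- and `T`-neighborhoods); conversely every such
pair gives an element `R₀ ∩ T₀` of the minimal base of the join. -/
theorem stmt_6 {Y : Type*} (R T : TopologicalSpace Y)
    (hR : ∀ y : Y, ∃ o : Set Y, MinNhd R y o)
    (hT : ∀ y : Y, ∃ o : Set Y, MinNhd T y o) :
    (∀ V : Set Y, (∃ y : Y, MinNhd (R ⊓ T) y V) →
      ∃! p : Set Y × Set Y,
        (∃ y : Y, MinNhd R y p.1 ∧ MinNhd T y p.2) ∧ V = p.1 ∩ p.2) ∧
    (∀ R₀ T₀ : Set Y, (∃ y : Y, MinNhd R y R₀ ∧ MinNhd T y T₀) →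
      ∃ y : Y, MinNhd (R ⊓ T) y (R₀ ∩ T₀)) := by
  constructor
  · rintro V ⟨y, hyV⟩
    obtain ⟨R₀, hR₀⟩ := hR y
    obtain ⟨T₀, hT₀⟩ := hT y
    have hmin := minNhd_inf hR hT hR₀ hT₀
    refine ⟨(R₀, T₀), ⟨⟨y, hR₀, hT₀⟩, minNhd_unique hyV hmin⟩, ?_⟩
    rintro ⟨R₁, T₁⟩ ⟨⟨z, hR₁, hT₁⟩, hVeq⟩
    have hVmin : V = R₀ ∩ T₀ := minNhd_unique hyV hmin
    -- z ∈ V and y ∈ V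
    have hzV : z ∈ V := by rw [hVeq]; exact ⟨hR₁.2.1, hT₁.2.1⟩
    have hyV' : y ∈ V := hyV.2.1
    have hzR₀ : z ∈ R₀ := by rw [hVmin] at hzV; exact hzV.1
    have hzT₀ : z ∈ T₀ := by rw [hVmin] at hzV; exact hzV.2
    have hyR₁ : y ∈ R₁ := by rw [hVeq] at hyV'; exact hyV'.1
    have hyT₁ : y ∈ T₁ := by rw [hVeq] at hyV'; exact hyV'.2
    have e1 : R₁ = R₀ :=
      subset_antisymm (hR₁.2.2 R₀ hR₀.1 hzR₀) (hR₀.2.2 R₁ hR₁.1 hyR₁)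
    have e2 : T₁ = T₀ :=
      subset_antisymm (hT₁.2.2 T₀ hT₀.1 hzT₀) (hT₀.2.2 T₁ hT₁.1 hyT₁)
    simp [e1, e2]
  · rintro R₀ T₀ ⟨y, h1, h2⟩
    exact ⟨y, minNhd_inf hR hT h1 h2⟩
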